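/- arXiv:2308.13748 — 2 statements merged into one kernel-verified Lean document; each statement's English description precedes it below -/
import Mathlib

section
/- If S_i(u) = A_i ∩ H_u^+ is a singleton and int(A_i) ∩ H_u^+ is empty, then for any sequence u^k converging to u in S^n, the diameter of S_i(u^k) converges to 0. -/
open Filter Topology

/-- The closed upper half-space `H_u^+`. -/
def Hplus (n : ℕ) (u : EuclideanSpace ℝ (Fin (n + 1))) : Set (EuclideanSpace ℝ (Fin n)) :=
  {x | (∑ i : Fin n, u (Fin.castSucc i) * x i) ≥ u (Fin.last n)}

/-! The sections `A ∩ S_u` of a closed relation `S` over a compact set `A` vary upper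
semicontinuously in `u`. Since `A ∩ H_u^+` is a single point `x₀`, each ball around `x₀` eventually
contains `A ∩ H_{u^k}^+`, which forces the diameters to zero. -/

theorem IsCompact.eventually_inter_section_subset {T X : Type*} [TopologicalSpace T]
    [TopologicalSpace X] {A U : Set X} (hA : IsCompact A) (hU : IsOpen U) {S : Set (T × X)}
    (hS : IsClosed S) {t₀ : T} (h : A ∩ {x | (t₀, x) ∈ S} ⊆ U) :
    ∀ᶠ t in 𝓝 t₀, A ∩ {x | (t, x) ∈ S} ⊆ U := by
  have hK : ∀ᶠ t in 𝓝 t₀, ∀ x ∈ A \ U, (t, x) ∉ S :=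
    (hA.diff hU).eventually_forall_of_forall_eventually fun x hx =>
      hS.isOpen_compl.mem_nhds fun hxS => hx.2 (h ⟨hx.1, hxS⟩)
  filter_upwards [hK] with t ht x hx
  by_contra hxU
  exact ht x ⟨hx.1, hxU⟩ hx.2

theorem Metric.tendsto_diam_zero_of_eventually_subset_ball {ι X : Type*} [PseudoMetricSpace X]
    {l : Filter ι} {s : ι → Set X} (x₀ : X)
    (h : ∀ r > 0, ∀ᶠ i in l, s i ⊆ Metric.ball x₀ r) :
    Tendsto (fun i => Metric.diam (s i)) l (𝓝 0) := by
  refine tendsto_order.2 ⟨fun a ha => .of_forall fun i => ha.trans_le Metric.diam_nonneg,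
    fun ε hε => ?_⟩
  filter_upwards [h (ε / 3) (by positivity)] with i hi
  calc Metric.diam (s i) ≤ Metric.diam (Metric.ball x₀ (ε / 3)) :=
        Metric.diam_mono hi Metric.isBounded_ball
    _ ≤ 2 * (ε / 3) := Metric.diam_ball (by positivity)
    _ < ε := by linarith

theorem isClosed_setOf_mem_Hplus (n : ℕ) :
    IsClosed {p : EuclideanSpace ℝ (Fin (n + 1)) × EuclideanSpace ℝ (Fin n) | p.2 ∈ Hplus n p.1} := by
  simp only [Hplus, ge_iff_le, Set.mem_ofPred_eq]
  exact isClosed_le (by fun_prop) (continuous_finsetSum _ fun _ _ => by fun_prop)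

theorem diam_tendsto_zero_general (n : ℕ) (A : Set (EuclideanSpace ℝ (Fin n)))
    (hcomp : IsCompact A)
    (ulim : EuclideanSpace ℝ (Fin (n + 1)))
    (hsingle : ∃ x₀, A ∩ Hplus n ulim = {x₀})
    (u : ℕ → EuclideanSpace ℝ (Fin (n + 1)))
    (hut : Tendsto u atTop (𝓝 ulim)) :
    Tendsto (fun k => Metric.diam (A ∩ Hplus n (u k))) atTop (𝓝 0) := by
  obtain ⟨x₀, hx₀⟩ := hsingle
  refine Metric.tendsto_diam_zero_of_eventually_subset_ball x₀ fun r hr =>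
    hut.eventually (p := fun v => A ∩ Hplus n v ⊆ Metric.ball x₀ r) ?_
  refine hcomp.eventually_inter_section_subset Metric.isOpen_ball (isClosed_setOf_mem_Hplus n) ?_
  change A ∩ Hplus n ulim ⊆ _
  rw [hx₀, Set.singleton_subset_iff]
  exact Metric.mem_ball_self hr

theorem diam_tendsto_zero (n : ℕ) (A : Set (EuclideanSpace ℝ (Fin n)))
    (hne : A.Nonempty) (hcomp : IsCompact A) (hconv : Convex ℝ A)
    (ulim : EuclideanSpace ℝ (Fin (n + 1)))
    (hulim : ulim ∈ Metric.sphere (0 : EuclideanSpace ℝ (Fin (n + 1))) 1)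
    (hsingle : ∃ x₀, A ∩ Hplus n ulim = {x₀})
    (hint : interior A ∩ Hplus n ulim = ∅)
    (u : ℕ → EuclideanSpace ℝ (Fin (n + 1)))
    (hu : ∀ k, u k ∈ Metric.sphere (0 : EuclideanSpace ℝ (Fin (n + 1))) 1)
    (hut : Tendsto u atTop (𝓝 ulim)) :
    Tendsto (fun k => Metric.diam (A ∩ Hplus n (u k))) atTop (𝓝 0) :=
  diam_tendsto_zero_general n A hcomp ulim hsingle u hut
end

section
/- Let A ⊆ R^n be a nonempty compact convex set. The function φ: S^n → R defined by φ(u) = δ*(u' | A ∩ H_u^+) − δ_*(u' | A ∩ H_u^+) when A ∩ H_u^+ ≠ ∅, φ(u) = (1 − ε − u_{n+1})/ε when A ∩ H_u^+ = ∅ and u_{n+1} > 1 − ε, and φ(u) = 0 when A ∩ H_u^+ = ∅ and u_{n+1} ≤ 1 − ε, is continuous on S^n for sufficiently small ε > 0, without any strict convexity assumption on A. -/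
open Classical in
/-- The modified optimal-value function `φ` with `f(x,u) = ⟨u', x⟩`. -/
noncomputable def phi (n : ℕ) (A : Set (EuclideanSpace ℝ (Fin n))) (ε : ℝ)
    (u : EuclideanSpace ℝ (Fin (n + 1))) : ℝ :=
  if (A ∩ Hplus n u).Nonempty then
    sSup ((fun x => ∑ i : Fin n, u (Fin.castSucc i) * x i) '' (A ∩ Hplus n u)) -
      sInf ((fun x => ∑ i : Fin n, u (Fin.castSucc i) * x i) '' (A ∩ Hplus n u))
  else if u (Fin.last n) > 1 - ε then (1 - ε - u (Fin.last n)) / ε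
  else 0

/-!
On the sphere `φ` agrees with the continuous function
`u ↦ max 0 (δ*(u' | A) - max u_{n+1} δ_*(u' | A)) + min 0 ((1 - ε - u_{n+1}) / ε)`.
Since `A` is compact and convex, `⟨u', ·⟩` maps `A` onto `[δ_*, δ*]`, so `A ∩ H_u^+` is nonempty iff
`u_{n+1} ≤ δ*`, and then its image is `[max u_{n+1} δ_*, δ*]`. As `δ* ≤ ‖u'‖ M = √(1 - u_{n+1}²) M`,
smallness of `ε` forces `u_{n+1} < 1 - ε` whenever `A ∩ H_u^+` is nonempty, so at most one summand
is nonzero. Both `δ*` and `δ_*` are `M`-Lipschitz in `u`, being a sup and an inf of functions that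
are `M`-Lipschitz in `u`.
-/

open Set

section SupInfOfLipschitzFamily

variable {α β : Type*} [PseudoMetricSpace α] {K : Set β} {f : α → β → ℝ} {L : ℝ}

theorem lipschitzWith_sSup_image (hK : K.Nonempty) (hbdd : ∀ u, BddAbove (f u '' K))
    (hf : ∀ x ∈ K, ∀ u v, f u x ≤ f v x + L * dist u v) :
    LipschitzWith L.toNNReal fun u => sSup (f u '' K) :=
  .of_le_add_mul' L fun u v => csSup_le (hK.image _) <| forall_mem_image.2 fun x hx =>
    (hf x hx u v).trans <| by gcongr; exact le_csSup (hbdd v) (mem_image_of_mem _ hx)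

theorem lipschitzWith_sInf_image (hK : K.Nonempty) (hbdd : ∀ u, BddBelow (f u '' K))
    (hf : ∀ x ∈ K, ∀ u v, f u x ≤ f v x + L * dist u v) :
    LipschitzWith L.toNNReal fun u => sInf (f u '' K) :=
  .of_le_add_mul' L fun u v => by
    rw [← sub_le_iff_le_add]
    refine le_csInf (hK.image _) <| forall_mem_image.2 fun x hx => ?_
    rw [sub_le_iff_le_add]
    exact (csInf_le (hbdd u) (mem_image_of_mem _ hx)).trans (hf x hx u v)

end SupInfOfLipschitzFamily

theorem ite_eq_max_zero_add_min_zero {F G T ε : ℝ} (hε : 0 < ε) (hGF : G ≤ F)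
    (hT : T ≤ F → T < 1 - ε) :
    (if T ≤ F then F - max T G else if T > 1 - ε then (1 - ε - T) / ε else 0) =
      max 0 (F - max T G) + min 0 ((1 - ε - T) / ε) := by
  split_ifs with hTF hTε
  · have hF : 0 ≤ F - max T G := sub_nonneg.2 (max_le hTF hGF)
    have hT' : 0 ≤ (1 - ε - T) / ε := div_nonneg (by linarith [hT hTF]) hε.le
    rw [max_eq_right hF, min_eq_left hT', add_zero]
  all_goals have hF : F - max T G ≤ 0 := sub_nonpos.2 ((not_le.1 hTF).le.trans (le_max_left _ _))
  · have hT' : (1 - ε - T) / ε ≤ 0 := div_nonpos_of_nonpos_of_nonneg (by linarith) hε.le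
    rw [max_eq_left hF, min_eq_right hT', zero_add]
  · have hT' : 0 ≤ (1 - ε - T) / ε := div_nonneg (by linarith) hε.le
    rw [max_eq_left hF, min_eq_left hT', add_zero]

section Objective

variable {n : ℕ}

def dropLast (u : EuclideanSpace ℝ (Fin (n + 1))) : EuclideanSpace ℝ (Fin n) :=
  WithLp.toLp 2 fun i => u i.castSucc

def objective (u : EuclideanSpace ℝ (Fin (n + 1))) (x : EuclideanSpace ℝ (Fin n)) : ℝ :=
  ∑ i : Fin n, u i.castSucc * x i

theorem norm_dropLast_sq_add (u : EuclideanSpace ℝ (Fin (n + 1))) :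
    ‖dropLast u‖ ^ 2 + u (Fin.last n) ^ 2 = ‖u‖ ^ 2 := by
  simp [EuclideanSpace.norm_sq_eq, Fin.sum_univ_castSucc, dropLast]

theorem norm_dropLast_le (u : EuclideanSpace ℝ (Fin (n + 1))) : ‖dropLast u‖ ≤ ‖u‖ :=
  (pow_le_pow_iff_left₀ (norm_nonneg _) (norm_nonneg _) two_ne_zero).1 <| by
    nlinarith [norm_dropLast_sq_add u, sq_nonneg (u (Fin.last n))]

theorem norm_dropLast_of_norm_eq_one {u : EuclideanSpace ℝ (Fin (n + 1))} (hu : ‖u‖ = 1) :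
    ‖dropLast u‖ = √(1 - u (Fin.last n) ^ 2) := by
  rw [← Real.sqrt_sq (norm_nonneg (dropLast u))]
  congr 1
  linarith [norm_dropLast_sq_add u, show ‖u‖ ^ 2 = 1 by rw [hu, one_pow]]

theorem objective_eq_inner (u : EuclideanSpace ℝ (Fin (n + 1))) (x : EuclideanSpace ℝ (Fin n)) :
    objective u x = inner ℝ (dropLast u) x := by
  simp [objective, dropLast, PiLp.inner_apply, mul_comm]

theorem continuous_objective (u : EuclideanSpace ℝ (Fin (n + 1))) : Continuous (objective u) := by
  unfold objective; fun_prop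

theorem objective_le_add_dist {M : ℝ} {x : EuclideanSpace ℝ (Fin n)} (hx : ‖x‖ ≤ M)
    (u v : EuclideanSpace ℝ (Fin (n + 1))) :
    objective u x ≤ objective v x + M * dist u v := by
  have hsub : objective u x - objective v x = objective (u - v) x := by
    simp [objective, Finset.sum_sub_distrib, sub_mul]
  calc objective u x = objective v x + inner ℝ (dropLast (u - v)) x := by
        rw [← objective_eq_inner, ← hsub, add_sub_cancel]
    _ ≤ objective v x + ‖dropLast (u - v)‖ * ‖x‖ := by gcongr; exact real_inner_le_norm _ _
    _ ≤ objective v x + M * dist u v := by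
        rw [dist_eq_norm, mul_comm M]
        gcongr
        exact norm_dropLast_le _

end Objective

section SupportFunctions

variable {n : ℕ} {A : Set (EuclideanSpace ℝ (Fin n))}

noncomputable def deltaSup (A : Set (EuclideanSpace ℝ (Fin n)))
    (u : EuclideanSpace ℝ (Fin (n + 1))) : ℝ :=
  sSup (objective u '' A)

noncomputable def deltaInf (A : Set (EuclideanSpace ℝ (Fin n)))
    (u : EuclideanSpace ℝ (Fin (n + 1))) : ℝ :=
  sInf (objective u '' A)

theorem lipschitzWith_deltaSup (hne : A.Nonempty) (hcomp : IsCompact A) {M : ℝ}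
    (hMb : ∀ x ∈ A, ‖x‖ ≤ M) : LipschitzWith M.toNNReal (deltaSup A) :=
  lipschitzWith_sSup_image hne (fun u => (hcomp.image (continuous_objective u)).bddAbove)
    fun x hx => objective_le_add_dist (hMb x hx)

theorem lipschitzWith_deltaInf (hne : A.Nonempty) (hcomp : IsCompact A) {M : ℝ}
    (hMb : ∀ x ∈ A, ‖x‖ ≤ M) : LipschitzWith M.toNNReal (deltaInf A) :=
  lipschitzWith_sInf_image hne (fun u => (hcomp.image (continuous_objective u)).bddBelow)
    fun x hx => objective_le_add_dist (hMb x hx)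

theorem deltaInf_le_deltaSup (hne : A.Nonempty) (hcomp : IsCompact A)
    (u : EuclideanSpace ℝ (Fin (n + 1))) : deltaInf A u ≤ deltaSup A u :=
  have hK := hcomp.image (continuous_objective u)
  csInf_le_csSup (hne.image _) hK.bddBelow hK.bddAbove

theorem deltaSup_le_of_norm_eq_one (hne : A.Nonempty) {M : ℝ} (hMb : ∀ x ∈ A, ‖x‖ ≤ M)
    {u : EuclideanSpace ℝ (Fin (n + 1))} (hu : ‖u‖ = 1) :
    deltaSup A u ≤ √(1 - u (Fin.last n) ^ 2) * M :=
  csSup_le (hne.image _) <| forall_mem_image.2 fun x hx => by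
    rw [objective_eq_inner, ← norm_dropLast_of_norm_eq_one hu]
    exact (real_inner_le_norm _ _).trans (by gcongr; exact hMb x hx)

theorem image_objective_inter_Hplus (hne : A.Nonempty) (hcomp : IsCompact A)
    (hconv : Convex ℝ A) (u : EuclideanSpace ℝ (Fin (n + 1))) :
    objective u '' (A ∩ Hplus n u) = Icc (max (u (Fin.last n)) (deltaInf A u)) (deltaSup A u) := by
  have hK : IsCompact (objective u '' A) := hcomp.image (continuous_objective u)
  have hconn : IsConnected (objective u '' A) :=
    (hconv.isConnected hne).image _ (continuous_objective u).continuousOn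
  rw [show Hplus n u = objective u ⁻¹' Ici (u (Fin.last n)) from rfl, image_inter_preimage,
    eq_Icc_of_connected_compact hconn hK]
  ext y
  simp only [deltaSup, deltaInf, mem_inter_iff, mem_Icc, mem_Ici, max_le_iff]
  tauto

end SupportFunctions

theorem phi_eq_ite {n : ℕ} {A : Set (EuclideanSpace ℝ (Fin n))} (hne : A.Nonempty)
    (hcomp : IsCompact A) (hconv : Convex ℝ A) (ε : ℝ) (u : EuclideanSpace ℝ (Fin (n + 1))) :
    phi n A ε u =
      if u (Fin.last n) ≤ deltaSup A u then deltaSup A u - max (u (Fin.last n)) (deltaInf A u)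
      else if u (Fin.last n) > 1 - ε then (1 - ε - u (Fin.last n)) / ε else 0 := by
  have himg := image_objective_inter_Hplus hne hcomp hconv u
  have hfeas : (A ∩ Hplus n u).Nonempty ↔ u (Fin.last n) ≤ deltaSup A u := by
    rw [← image_nonempty, himg, nonempty_Icc, max_le_iff,
      and_iff_left (deltaInf_le_deltaSup hne hcomp u)]
  rw [phi]
  by_cases hT : u (Fin.last n) ≤ deltaSup A u
  · rw [if_pos (hfeas.2 hT), if_pos hT]
    change sSup (objective u '' _) - sInf (objective u '' _) = _
    rw [himg, csSup_Icc, csInf_Icc] <;>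
      exact max_le hT (deltaInf_le_deltaSup hne hcomp u)
  · rw [if_neg (mt hfeas.1 hT), if_neg hT]

theorem last_lt_of_le_deltaSup {n : ℕ} {A : Set (EuclideanSpace ℝ (Fin n))} (hne : A.Nonempty)
    {M : ℝ} (hM : 0 ≤ M) (hMb : ∀ x ∈ A, ‖x‖ ≤ M) {ε : ℝ}
    (hsmall : √(2 * ε - ε ^ 2) * M < 1 - ε) {u : EuclideanSpace ℝ (Fin (n + 1))}
    (hu : ‖u‖ = 1) (hT : u (Fin.last n) ≤ deltaSup A u) : u (Fin.last n) < 1 - ε := by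
  by_contra! hTε
  have hε : 0 ≤ 1 - ε := (mul_nonneg (Real.sqrt_nonneg _) hM).trans hsmall.le
  have : √(1 - u (Fin.last n) ^ 2) * M ≤ √(2 * ε - ε ^ 2) * M := by
    gcongr ?_ * _
    exact Real.sqrt_le_sqrt (by nlinarith)
  linarith [deltaSup_le_of_norm_eq_one hne hMb hu]

theorem phi_continuous (n : ℕ) (A : Set (EuclideanSpace ℝ (Fin n)))
    (hne : A.Nonempty) (hcomp : IsCompact A) (hconv : Convex ℝ A)
    (M : ℝ) (hM : 0 < M) (hMb : ∀ x ∈ A, ‖x‖ ≤ M)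
    (ε : ℝ) (hε : 0 < ε) (hsmall : Real.sqrt (2 * ε - ε ^ 2) * M < 1 - ε) :
    ContinuousOn (phi n A ε) (Metric.sphere (0 : EuclideanSpace ℝ (Fin (n + 1))) 1) := by
  have hsup := (lipschitzWith_deltaSup hne hcomp hMb).continuous
  have hinf := (lipschitzWith_deltaInf hne hcomp hMb).continuous
  have hglobal : Continuous fun u : EuclideanSpace ℝ (Fin (n + 1)) =>
      max 0 (deltaSup A u - max (u (Fin.last n)) (deltaInf A u)) +
        min 0 ((1 - ε - u (Fin.last n)) / ε) := by
    fun_prop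
  refine hglobal.continuousOn.congr fun u hu => ?_
  have hu1 : ‖u‖ = 1 := mem_sphere_zero_iff_norm.1 hu
  rw [phi_eq_ite hne hcomp hconv]
  exact ite_eq_max_zero_add_min_zero hε (deltaInf_le_deltaSup hne hcomp u)
    (last_lt_of_le_deltaSup hne hM.le hMb hsmall hu1)
end
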